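/- Goals-to-tests conversion for Demon: For every hybrid game α and all sets of states X, Y ⊆ S, Demon's semi-competitive winning region can be expressed by converting the goals into tests appended in both orders: δ_α(X, Y) = δ_{α ; ?X ; (?Y)^d}(S, S) ∩ δ_{α ; (?Y)^d ; ?X}(S, S), where on the right-hand side both players' goals are the trivial goal S. -/
import Mathlib


open Set

/-- Hybrid games over a variable set `V`. Terms/ODE right-hand sides are
interpreted as functions from states `V → ℝ` to `ℝ`; tests and evolution
domain constraints are sets of states. -/
inductive Game (V : Type*) where
  | assign (x : V) (e : (V → ℝ) → ℝ)
  | ode (x : V) (f : (V → ℝ) → ℝ) (Q : Set (V → ℝ))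
  | test (Q : Set (V → ℝ))
  | choice (a b : Game V)
  | seq (a b : Game V)
  | dual (a : Game V)
  | star (a : Game V)

variable {V : Type*} [DecidableEq V]

/-- `φ : ℝ → (V → ℝ)` (restricted to `[0,r]`) is a solution of `x' = f(x) & Q`
of duration `r ≥ 0`: `t ↦ φ t x` is differentiable with derivative `f (φ s)`
at each `s ∈ [0,r]`, `φ s ∈ Q` on `[0,r]`, and all other variables stay
constant along `φ`. -/
def IsSolution (x : V) (f : (V → ℝ) → ℝ) (Q : Set (V → ℝ)) (r : ℝ)
    (φ : ℝ → (V → ℝ)) : Prop :=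
  0 ≤ r ∧
  (∀ s ∈ Set.Icc 0 r, HasDerivAt (fun t => φ t x) (f (φ s)) s) ∧
  (∀ s ∈ Set.Icc 0 r, φ s ∈ Q) ∧
  (∀ s ∈ Set.Icc 0 r, ∀ y, y ≠ x → φ s y = φ 0 y)

mutual
/-- Angel's semi-competitive winning region ς_α(X,Y). -/
def angel : Game V → Set (V → ℝ) → Set (V → ℝ) → Set (V → ℝ)
  | .assign x e, X, _ => {ω | Function.update ω x (e ω) ∈ X}
  | .ode x f Q, X, _ =>
      {ω | ∃ r φ, IsSolution x f Q r φ ∧ φ 0 = ω ∧ φ r ∈ X}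
  | .test Q, X, _ => Q ∩ X
  | .choice a b, X, Y => angel a X Y ∪ angel b X Y
  | .seq a b, X, Y => angel a (angel b X Y) (demon b X Y)
  | .dual a, X, Y => demon a Y X
  | .star a, X, Y =>
      ⋂₀ {Z | X ∪ angel a Z Zᶜ ⊆ Z} ∪
      ⋂₀ {Z | (X ∩ Y) ∪ (angel a Z Z ∩ demon a Z Z) ⊆ Z}

/-- Demon's semi-competitive winning region δ_α(X,Y). -/
def demon : Game V → Set (V → ℝ) → Set (V → ℝ) → Set (V → ℝ)
  | .assign x e, _, Y => {ω | Function.update ω x (e ω) ∈ Y}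
  | .ode x f Q, X, Y =>
      {ω | ∀ r φ, IsSolution x f Q r φ → φ 0 = ω → ∀ s ∈ Set.Icc 0 r, φ s ∈ Y} ∪
      {ω | ∃ r φ, IsSolution x f Q r φ ∧ φ 0 = ω ∧ ∃ s ∈ Set.Icc 0 r, φ s ∈ X ∩ Y}
  | .test Q, _, Y => Qᶜ ∪ Y
  | .choice a b, X, Y =>
      (demon a X Y ∩ demon b X Y) ∪ (demon a X Y ∩ angel a X Y) ∪
      (demon b X Y ∩ angel b X Y)
  | .seq a b, X, Y => demon a (angel b X Y) (demon b X Y)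
  | .dual a, X, Y => angel a Y X
  | .star a, X, Y =>
      ⋃₀ {Z | Z ⊆ Y ∩ demon a Zᶜ Z} ∪
      ⋂₀ {Z | (X ∩ Y) ∪ (angel a Z Z ∩ demon a Z Z) ⊆ Z}
end

/-- Angel's one-argument zero-sum dGL winning region ς_α(X). -/
def dglAngel : Game V → Set (V → ℝ) → Set (V → ℝ)
  | .assign x e, X => {ω | Function.update ω x (e ω) ∈ X}
  | .ode x f Q, X => {ω | ∃ r φ, IsSolution x f Q r φ ∧ φ 0 = ω ∧ φ r ∈ X}
  | .test Q, X => Q ∩ X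
  | .choice a b, X => dglAngel a X ∪ dglAngel b X
  | .seq a b, X => dglAngel a (dglAngel b X)
  | .dual a, X => (dglAngel a Xᶜ)ᶜ
  | .star a, X => ⋂₀ {Z | X ∪ dglAngel a Z ⊆ Z}

/-- Demon's one-argument zero-sum dGL winning region δ_α(X) = (ς_α(Xᶜ))ᶜ. -/
def dglDemon (g : Game V) (X : Set (V → ℝ)) : Set (V → ℝ) :=
  (dglAngel g Xᶜ)ᶜ

/-- Systematization α^{-d}: removes all dual operators. -/
def Game.sys : Game V → Game V
  | .assign x e => .assign x e
  | .ode x f Q => .ode x f Q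
  | .test Q => .test Q
  | .choice a b => .choice a.sys b.sys
  | .seq a b => .seq a.sys b.sys
  | .dual a => a.sys
  | .star a => .star a.sys


/-- Truncating a solution at an intermediate time yields a solution. -/
lemma IsSolution.trunc {x : V} {f : (V → ℝ) → ℝ} {Q : Set (V → ℝ)} {r : ℝ}
    {φ : ℝ → (V → ℝ)} (h : IsSolution x f Q r φ) {s : ℝ} (hs : s ∈ Set.Icc 0 r) :
    IsSolution x f Q s φ := by
  obtain ⟨hr, h1, h2, h3⟩ := h
  exact ⟨hs.1, fun t ht => h1 t ⟨ht.1, ht.2.trans hs.2⟩,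
    fun t ht => h2 t ⟨ht.1, ht.2.trans hs.2⟩,
    fun t ht => h3 t ⟨ht.1, ht.2.trans hs.2⟩⟩

/-- Monotonicity of both winning regions in both goal arguments. -/
lemma mono_aux (α : Game V) : ∀ ⦃X X' Y Y' : Set (V → ℝ)⦄, X ⊆ X' → Y ⊆ Y' →
    angel α X Y ⊆ angel α X' Y' ∧ demon α X Y ⊆ demon α X' Y' := by
  induction α with
  | assign x e =>
    intro X X' Y Y' hX hY
    exact ⟨fun ω h => hX h, fun ω h => hY h⟩
  | ode x f Q =>
    intro X X' Y Y' hX hY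
    constructor
    · rintro ω ⟨r, φ, hsol, h0, hr⟩
      exact ⟨r, φ, hsol, h0, hX hr⟩
    · rintro ω (h | ⟨r, φ, hsol, h0, s, hs, hmem⟩)
      · exact Or.inl fun r φ hsol h0 s hs => hY (h r φ hsol h0 s hs)
      · exact Or.inr ⟨r, φ, hsol, h0, s, hs, hX hmem.1, hY hmem.2⟩
  | test Q =>
    intro X X' Y Y' hX hY
    exact ⟨Set.inter_subset_inter (subset_refl _) hX,
      Set.union_subset_union (subset_refl _) hY⟩
  | choice a b iha ihb =>
    intro X X' Y Y' hX hY
    obtain ⟨ha1, ha2⟩ := iha hX hY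
    obtain ⟨hb1, hb2⟩ := ihb hX hY
    refine ⟨Set.union_subset_union ha1 hb1, ?_⟩
    exact Set.union_subset_union
      (Set.union_subset_union (Set.inter_subset_inter ha2 hb2)
        (Set.inter_subset_inter ha2 ha1))
      (Set.inter_subset_inter hb2 hb1)
  | seq a b iha ihb =>
    intro X X' Y Y' hX hY
    obtain ⟨hb1, hb2⟩ := ihb hX hY
    exact iha hb1 hb2
  | dual a iha =>
    intro X X' Y Y' hX hY
    exact ⟨(iha hY hX).2, (iha hY hX).1⟩
  | star a iha =>
    intro X X' Y Y' hX hY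
    constructor
    · refine Set.union_subset_union ?_ ?_
      · exact Set.sInter_subset_sInter fun Z hZ =>
          (Set.union_subset_union hX (subset_refl _)).trans hZ
      · exact Set.sInter_subset_sInter fun Z hZ =>
          (Set.union_subset_union (Set.inter_subset_inter hX hY) (subset_refl _)).trans hZ
    · refine Set.union_subset_union ?_ ?_
      · exact Set.sUnion_subset_sUnion fun Z hZ =>
          hZ.trans (Set.inter_subset_inter hY (subset_refl _))
      · exact Set.sInter_subset_sInter fun Z hZ =>
          (Set.union_subset_union (Set.inter_subset_inter hX hY) (subset_refl _)).trans hZ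

lemma angel_mono (α : Game V) {X X' Y Y' : Set (V → ℝ)} (hX : X ⊆ X') (hY : Y ⊆ Y') :
    angel α X Y ⊆ angel α X' Y' := (mono_aux α hX hY).1

lemma demon_mono (α : Game V) {X X' Y Y' : Set (V → ℝ)} (hX : X ⊆ X') (hY : Y ⊆ Y') :
    demon α X Y ⊆ demon α X' Y' := (mono_aux α hX hY).2

/-- Cross lemma: a joint winning position for Angel (goals `X,Y`) and Demon
(goals `X',Y'`) is a joint winning position for the goal `(X∪X')∩(Y∪Y')`. -/
lemma cross (α : Game V) : ∀ X Y X' Y' : Set (V → ℝ),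
    angel α X Y ∩ demon α X' Y' ⊆
      angel α ((X ∪ X') ∩ (Y ∪ Y')) ((X ∪ X') ∩ (Y ∪ Y')) ∩
      demon α ((X ∪ X') ∩ (Y ∪ Y')) ((X ∪ X') ∩ (Y ∪ Y')) := by
  induction α with
  | assign x e =>
    rintro X Y X' Y' ω ⟨h1, h2⟩
    exact ⟨⟨Or.inl h1, Or.inr h2⟩, ⟨Or.inl h1, Or.inr h2⟩⟩
  | ode x f Q =>
    rintro X Y X' Y' ω ⟨⟨r, φ, hsol, h0, hr⟩, hd⟩
    rcases hd with hall | ⟨r2, φ2, hsol2, h02, s, hs, hmem⟩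
    · have hY' : φ r ∈ Y' := hall r φ hsol h0 r ⟨hsol.1, le_refl r⟩
      have hS : φ r ∈ (X ∪ X') ∩ (Y ∪ Y') := ⟨Or.inl hr, Or.inr hY'⟩
      exact ⟨⟨r, φ, hsol, h0, hS⟩,
        Or.inr ⟨r, φ, hsol, h0, r, ⟨hsol.1, le_refl r⟩, hS, hS⟩⟩
    · have hS : φ2 s ∈ (X ∪ X') ∩ (Y ∪ Y') := ⟨Or.inr hmem.1, Or.inr hmem.2⟩
      exact ⟨⟨s, φ2, hsol2.trunc hs, h02, hS⟩,
        Or.inr ⟨r2, φ2, hsol2, h02, s, hs, hS, hS⟩⟩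
  | test Q =>
    rintro X Y X' Y' ω ⟨⟨hQ, hX⟩, hd⟩
    rcases hd with hQc | hY'
    · exact absurd hQ hQc
    · exact ⟨⟨hQ, Or.inl hX, Or.inr hY'⟩, Or.inr ⟨Or.inl hX, Or.inr hY'⟩⟩
  | choice a b iha ihb =>
    rintro X Y X' Y' ω ⟨hA, hD⟩
    set S := (X ∪ X') ∩ (Y ∪ Y') with hSdef
    have hS' : (X' ∪ X') ∩ (Y' ∪ Y') ⊆ S :=
      Set.inter_subset_inter
        (Set.union_subset Set.subset_union_right Set.subset_union_right)
        (Set.union_subset Set.subset_union_right Set.subset_union_right)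
    have key : (ω ∈ angel a S S ∩ demon a S S) ∨ (ω ∈ angel b S S ∩ demon b S S) := by
      rcases hA with ha | hb
      · rcases hD with ((⟨hda, _⟩ | ⟨hda, _⟩) | ⟨hdb, hab⟩)
        · exact Or.inl (iha X Y X' Y' ⟨ha, hda⟩)
        · exact Or.inl (iha X Y X' Y' ⟨ha, hda⟩)
        · have := ihb X' Y' X' Y' ⟨hab, hdb⟩
          exact Or.inr ⟨angel_mono b hS' hS' this.1, demon_mono b hS' hS' this.2⟩
      · rcases hD with ((⟨_, hdb⟩ | ⟨hda, haa⟩) | ⟨hdb, _⟩)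
        · exact Or.inr (ihb X Y X' Y' ⟨hb, hdb⟩)
        · have := iha X' Y' X' Y' ⟨haa, hda⟩
          exact Or.inl ⟨angel_mono a hS' hS' this.1, demon_mono a hS' hS' this.2⟩
        · exact Or.inr (ihb X Y X' Y' ⟨hb, hdb⟩)
    rcases key with ⟨h1, h2⟩ | ⟨h1, h2⟩
    · exact ⟨Or.inl h1, Or.inl (Or.inr ⟨h2, h1⟩)⟩
    · exact ⟨Or.inr h1, Or.inr ⟨h2, h1⟩⟩
  | seq a b iha ihb =>
    rintro X Y X' Y' ω ⟨hA, hD⟩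
    set S := (X ∪ X') ∩ (Y ∪ Y') with hSdef
    have h := iha (angel b X Y) (demon b X Y) (angel b X' Y') (demon b X' Y') ⟨hA, hD⟩
    have hT : (angel b X Y ∪ angel b X' Y') ∩ (demon b X Y ∪ demon b X' Y') ⊆
        angel b S S ∩ demon b S S := by
      have hXY : (X ∪ X) ∩ (Y ∪ Y) ⊆ S := by
        rw [Set.union_self, Set.union_self]
        exact Set.inter_subset_inter Set.subset_union_left Set.subset_union_left
      have hXY' : (X' ∪ X') ∩ (Y' ∪ Y') ⊆ S := by
        rw [Set.union_self, Set.union_self]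
        exact Set.inter_subset_inter Set.subset_union_right Set.subset_union_right
      have hS2 : (X' ∪ X) ∩ (Y' ∪ Y) ⊆ S := by
        rw [Set.union_comm X' X, Set.union_comm Y' Y]
      rintro ν ⟨h1, h2⟩
      rcases h1 with h1 | h1 <;> rcases h2 with h2 | h2
      · have := ihb X Y X Y ⟨h1, h2⟩
        exact ⟨angel_mono b hXY hXY this.1, demon_mono b hXY hXY this.2⟩
      · exact ihb X Y X' Y' ⟨h1, h2⟩
      · have := ihb X' Y' X Y ⟨h1, h2⟩
        exact ⟨angel_mono b hS2 hS2 this.1, demon_mono b hS2 hS2 this.2⟩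
      · have := ihb X' Y' X' Y' ⟨h1, h2⟩
        exact ⟨angel_mono b hXY' hXY' this.1, demon_mono b hXY' hXY' this.2⟩
    have hT1 : (angel b X Y ∪ angel b X' Y') ∩ (demon b X Y ∪ demon b X' Y') ⊆
        angel b S S := hT.trans Set.inter_subset_left
    have hT2 : (angel b X Y ∪ angel b X' Y') ∩ (demon b X Y ∪ demon b X' Y') ⊆
        demon b S S := hT.trans Set.inter_subset_right
    exact ⟨angel_mono a hT1 hT2 h.1, demon_mono a hT1 hT2 h.2⟩
  | dual a iha =>
    rintro X Y X' Y' ω ⟨hA, hD⟩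
    have h := iha Y' X' Y X ⟨hD, hA⟩
    have hE : (Y' ∪ Y) ∩ (X' ∪ X) = (X ∪ X') ∩ (Y ∪ Y') := by
      rw [Set.union_comm Y' Y, Set.union_comm X' X, Set.inter_comm]
    rw [hE] at h
    exact ⟨h.2, h.1⟩
  | star a iha =>
    rintro X Y X' Y' ω ⟨hA, hD⟩
    set S := (X ∪ X') ∩ (Y ∪ Y') with hSdef
    -- the least joint fixpoint for a parameter T
    set I2 : Set (V → ℝ) → Set (V → ℝ) :=
      fun T => ⋂₀ {Z | T ∪ (angel a Z Z ∩ demon a Z Z) ⊆ Z} with hI2def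
    have hI2mono : ∀ {T T' : Set (V → ℝ)}, T ⊆ T' → I2 T ⊆ I2 T' := by
      intro T T' hTT'
      exact Set.sInter_subset_sInter fun Z hZ =>
        (Set.union_subset_union hTT' (subset_refl _)).trans hZ
    have hI2pre : ∀ T : Set (V → ℝ),
        T ∪ (angel a (I2 T) (I2 T) ∩ demon a (I2 T) (I2 T)) ⊆ I2 T := by
      intro T ν hν Z hZ
      have hWZ : I2 T ⊆ Z := Set.sInter_subset_of_mem hZ
      rcases hν with hν | ⟨hν1, hν2⟩
      · exact hZ (Or.inl hν)
      · exact hZ (Or.inr ⟨angel_mono a hWZ hWZ hν1, demon_mono a hWZ hWZ hν2⟩)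
    have hgoal : ω ∈ I2 S → ω ∈ angel (Game.star a) S S ∩ demon (Game.star a) S S := by
      intro h
      rw [angel, demon, Set.inter_self]
      exact ⟨Or.inr h, Or.inr h⟩
    rw [angel] at hA
    rw [demon] at hD
    rcases hA with hA | hA
    swap
    · exact hgoal (hI2mono (Set.inter_subset_inter Set.subset_union_left Set.subset_union_left) hA)
    rcases hD with hD | hD
    swap
    · exact hgoal (hI2mono (Set.inter_subset_inter Set.subset_union_right Set.subset_union_right) hD)
    -- core case: hA ∈ I1 X, hD ∈ U1 Y'
    obtain ⟨Z₀, hZ₀, hωZ₀⟩ := hD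
    set W := I2 (X ∩ Y') with hWdef
    have hXYW : X ∩ Y' ⊆ W := fun ν hν => hI2pre (X ∩ Y') (Or.inl hν)
    have hVpre : (Z₀ᶜ ∪ W) ∈ {Z | X ∪ angel a Z Zᶜ ⊆ Z} := by
      rintro ν (hν | hν)
      · by_cases hz : ν ∈ Z₀
        · exact Or.inr (hXYW ⟨hν, (hZ₀ hz).1⟩)
        · exact Or.inl hz
      · by_cases hz : ν ∈ Z₀
        swap
        · exact Or.inl hz
        have hd : ν ∈ demon a Z₀ᶜ Z₀ := (hZ₀ hz).2
        have h := iha (Z₀ᶜ ∪ W) (Z₀ᶜ ∪ W)ᶜ Z₀ᶜ Z₀ ⟨hν, hd⟩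
        have hT' : ((Z₀ᶜ ∪ W) ∪ Z₀ᶜ) ∩ ((Z₀ᶜ ∪ W)ᶜ ∪ Z₀) ⊆ W := by
          intro μ hμ
          simp only [Set.mem_inter_iff, Set.mem_union, Set.mem_compl_iff] at hμ
          by_cases hW : μ ∈ W
          · exact hW
          · exfalso; tauto
        exact Or.inr (hI2pre (X ∩ Y')
          (Or.inr ⟨angel_mono a hT' hT' h.1, demon_mono a hT' hT' h.2⟩))
    have hωV : ω ∈ Z₀ᶜ ∪ W := hA _ hVpre
    have hωW : ω ∈ W := by
      rcases hωV with h | h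
      · exact absurd hωZ₀ h
      · exact h
    exact hgoal (hI2mono (Set.inter_subset_inter Set.subset_union_left Set.subset_union_right) hωW)

/-- The joint winning region depends only on `X ∩ Y`. -/
lemma joint_eq (α : Game V) (X Y : Set (V → ℝ)) :
    angel α X Y ∩ demon α X Y =
      angel α (X ∩ Y) (X ∩ Y) ∩ demon α (X ∩ Y) (X ∩ Y) := by
  apply Set.Subset.antisymm
  · have h := cross α X Y X Y
    rwa [Set.union_self, Set.union_self] at h
  · exact Set.inter_subset_inter
      (angel_mono α Set.inter_subset_left Set.inter_subset_right)
      (demon_mono α Set.inter_subset_left Set.inter_subset_right)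

/-- Angel's region depends on Demon's goal only through `X ∩ Y`;
Demon's region depends on Angel's goal only through `X ∩ Y`. -/
lemma kAD (α : Game V) :
    (∀ X Y Y' : Set (V → ℝ), X ∩ Y = X ∩ Y' → angel α X Y = angel α X Y') ∧
    (∀ X X' Y : Set (V → ℝ), X ∩ Y = X' ∩ Y → demon α X Y = demon α X' Y) := by
  induction α with
  | assign x e => exact ⟨fun _ _ _ _ => rfl, fun _ _ _ _ => rfl⟩
  | ode x f Q =>
    refine ⟨fun _ _ _ _ => rfl, fun X X' Y h => ?_⟩
    rw [demon, demon, h]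
  | test Q => exact ⟨fun _ _ _ _ => rfl, fun _ _ _ _ => rfl⟩
  | choice a b iha ihb =>
    constructor
    · intro X Y Y' h
      rw [angel, angel, iha.1 X Y Y' h, ihb.1 X Y Y' h]
    · intro X X' Y h
      have ha : demon a X Y ∩ angel a X Y = demon a X' Y ∩ angel a X' Y := by
        rw [Set.inter_comm, Set.inter_comm (demon a X' Y), joint_eq a X Y, joint_eq a X' Y, h]
      have hb : demon b X Y ∩ angel b X Y = demon b X' Y ∩ angel b X' Y := by
        rw [Set.inter_comm, Set.inter_comm (demon b X' Y), joint_eq b X Y, joint_eq b X' Y, h]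
      rw [demon, demon, ha, hb, iha.2 X X' Y h, ihb.2 X X' Y h]
  | seq a b iha ihb =>
    constructor
    · intro X Y Y' h
      have hb1 : angel b X Y = angel b X Y' := ihb.1 X Y Y' h
      have hkey : angel b X Y' ∩ demon b X Y = angel b X Y' ∩ demon b X Y' := by
        calc angel b X Y' ∩ demon b X Y = angel b X Y ∩ demon b X Y := by rw [hb1]
          _ = angel b (X ∩ Y) (X ∩ Y) ∩ demon b (X ∩ Y) (X ∩ Y) := joint_eq b X Y
          _ = angel b (X ∩ Y') (X ∩ Y') ∩ demon b (X ∩ Y') (X ∩ Y') := by rw [h]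
          _ = angel b X Y' ∩ demon b X Y' := (joint_eq b X Y').symm
      rw [angel, angel, hb1]
      exact iha.1 _ _ _ hkey
    · intro X X' Y h
      have hb2 : demon b X Y = demon b X' Y := ihb.2 X X' Y h
      have hkey : angel b X Y ∩ demon b X' Y = angel b X' Y ∩ demon b X' Y := by
        calc angel b X Y ∩ demon b X' Y = angel b X Y ∩ demon b X Y := by rw [hb2]
          _ = angel b (X ∩ Y) (X ∩ Y) ∩ demon b (X ∩ Y) (X ∩ Y) := joint_eq b X Y
          _ = angel b (X' ∩ Y) (X' ∩ Y) ∩ demon b (X' ∩ Y) (X' ∩ Y) := by rw [h]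
          _ = angel b X' Y ∩ demon b X' Y := (joint_eq b X' Y).symm
      rw [demon, demon, hb2]
      exact iha.2 _ _ _ hkey
  | dual a iha =>
    constructor
    · intro X Y Y' h
      rw [angel, angel]
      exact iha.2 Y Y' X (by rw [Set.inter_comm, h, Set.inter_comm])
    · intro X X' Y h
      rw [demon, demon]
      exact iha.1 Y X X' (by rw [Set.inter_comm, h, Set.inter_comm])
  | star a iha =>
    constructor
    · intro X Y Y' h
      rw [angel, angel, h]
    · intro X X' Y h
      rw [demon, demon, h]

/-- Goals-to-tests conversion for Demon:
`δ_α(X, Y) = δ_{α ; ?X ; (?Y)^d}(S, S) ∩ δ_{α ; (?Y)^d ; ?X}(S, S)`. -/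
theorem goals_to_tests_demon (α : Game V) (X Y : Set (V → ℝ)) :
    demon α X Y =
      demon (.seq (.seq α (.test X)) (.dual (.test Y))) Set.univ Set.univ ∩
      demon (.seq (.seq α (.dual (.test Y))) (.test X)) Set.univ Set.univ := by
  have e1 : demon (.seq (.seq α (.test X)) (.dual (.test Y))) Set.univ Set.univ =
      demon α X (Xᶜ ∪ Y) := by
    simp [demon, angel]
  have e2 : demon (.seq (.seq α (.dual (.test Y))) (.test X)) Set.univ Set.univ =
      demon α (Yᶜ ∪ X) Y := by
    simp [demon, angel]
  have hk : demon α (Yᶜ ∪ X) Y = demon α X Y := by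
    refine ((kAD α).2 (Yᶜ ∪ X) X Y ?_)
    rw [Set.union_inter_distrib_right, Set.compl_inter_self, Set.empty_union]
  have hsub : demon α X Y ⊆ demon α X (Xᶜ ∪ Y) :=
    demon_mono α (subset_refl _) Set.subset_union_right
  rw [e1, e2, hk]
  exact (Set.inter_eq_right.mpr hsub).symm
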